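/- Let (f,g): X × Y → [0,1]² be a two-player game with compacta X, Y and continuous payoff functions f and g, and let ⋆ and ∗ be continuous t-norms. If a pair of possibility capacities (ν, μ) ∈ M_∪X × M_∪Y is an equilibrium under uncertainty with respect to ⋆, then (ν, μ) is a Nash equilibrium of the game in possibility-capacity strategies with expected payoffs ef(ν', μ') = ∫_{X×Y}^{∨⋆} f d(ν' ⊛ μ') and eg(ν', μ') = ∫_{X×Y}^{∨⋆} g d(ν' ⊛ μ'), where ⊛ is the tensor product generated by ∗; i.e. ef(ν', μ) ≤ ef(ν, μ) for all ν' ∈ M_∪X and eg(ν, μ') ≤ eg(ν, μ) for all μ' ∈ M_∪Y. -/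

import Mathlib

/-!
On a compactum the density `x ↦ ν {x}` of a capacity is upper semicontinuous, and for a
possibility capacity a finite-subcover argument gives `ν F = max {ν {x} | x ∈ F}`; the tensor
product `ν ⊛ μ` has this form by definition. For such capacities
`∫^{∨⋆} h dν = max_z ν {z} ⋆ h z`, using only monotonicity of `⋆`.

Pick `x₀` with `ν {x₀} = 1`; the equilibrium condition forces `x₀ ∈ R₁(μ)`. For any `ν'`,
`(ν' ⊛ μ) {(x, y)} ⋆ f (x, y) ≤ μ {y} ⋆ f (x, y) ≤ P₁(x, μ) ≤ P₁(x₀, μ)`, so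
`ef(ν', μ) ≤ P₁(x₀, μ)`; and `(ν ⊛ μ) {(x₀, y)} = 1 ∗ μ {y} = μ {y}` gives
`P₁(x₀, μ) ≤ ef(ν, μ)`. The second player is symmetric.
-/

open Set TopologicalSpace

universe u v

/-- A (upper-semicontinuous) capacity on a topological space `X`:
a normalized monotone set function on the closed subsets, upper semicontinuous
in the sense of Zarichnyi–Nykyforchyn. -/
structure Capacity (X : Type u) [TopologicalSpace X] : Type u where
  toFun : Closeds X → ℝ
  empty' : toFun ⊥ = 0
  univ' : toFun ⊤ = 1
  mono' : ∀ F G : Closeds X, F ≤ G → toFun F ≤ toFun G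
  usc' : ∀ (F : Closeds X) (a : ℝ), toFun F < a →
    ∃ O : Set X, IsOpen O ∧ (F : Set X) ⊆ O ∧ ∀ B : Closeds X, (B : Set X) ⊆ O → toFun B < a

namespace Capacity

variable {X : Type u} [TopologicalSpace X]

/-- Value of a capacity on (the closure of) an arbitrary set; on closed sets this is
the value of the capacity. -/
def cval (ν : Capacity X) (A : Set X) : ℝ := ν.toFun ⟨closure A, isClosed_closure⟩

/-- The sup-extension of a capacity to open sets:
`ν(U) = sup {ν K : K closed, K ⊆ U}`. -/
noncomputable def oval (ν : Capacity X) (U : Set X) : ℝ :=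
  sSup {r : ℝ | ∃ K : Closeds X, (K : Set X) ⊆ U ∧ ν.toFun K = r}

end Capacity

/-- The topology on the space `MX` of capacities, generated by the subbase
`O₋(F,a) = {c : c(F) < a}` (`F` closed) and `O₊(U,a) = {c : c(U) > a}` (`U` open). -/
instance capacityTopology (X : Type u) [TopologicalSpace X] : TopologicalSpace (Capacity X) :=
  TopologicalSpace.generateFrom
    ({S | ∃ (F : Closeds X) (a : ℝ), a ∈ Icc (0:ℝ) 1 ∧
        S = {c : Capacity X | c.toFun F < a}} ∪
     {S | ∃ U : Set X, IsOpen U ∧ ∃ a ∈ Icc (0:ℝ) 1,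
        S = {c : Capacity X | a < c.oval U}})

/-- A possibility capacity: `ν(A ∪ B) = max (ν A) (ν B)` on closed sets. -/
def IsPossibility {X : Type u} [TopologicalSpace X] (ν : Capacity X) : Prop :=
  ∀ A B : Closeds X, ν.toFun (A ⊔ B) = max (ν.toFun A) (ν.toFun B)

/-- A necessity capacity: `ν(A ∩ B) = min (ν A) (ν B)` on closed sets. -/
def IsNecessity {X : Type u} [TopologicalSpace X] (ν : Capacity X) : Prop :=
  ∀ A B : Closeds X, ν.toFun (A ⊓ B) = min (ν.toFun A) (ν.toFun B)

/-- A triangular norm on `[0,1]`. -/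
structure Tnorm : Type where
  toFun : ℝ → ℝ → ℝ
  mem' : ∀ s ∈ Icc (0:ℝ) 1, ∀ t ∈ Icc (0:ℝ) 1, toFun s t ∈ Icc (0:ℝ) 1
  comm' : ∀ s ∈ Icc (0:ℝ) 1, ∀ t ∈ Icc (0:ℝ) 1, toFun s t = toFun t s
  assoc' : ∀ s ∈ Icc (0:ℝ) 1, ∀ t ∈ Icc (0:ℝ) 1, ∀ r ∈ Icc (0:ℝ) 1,
    toFun (toFun s t) r = toFun s (toFun t r)
  mono' : ∀ s₁ ∈ Icc (0:ℝ) 1, ∀ s₂ ∈ Icc (0:ℝ) 1, ∀ t₁ ∈ Icc (0:ℝ) 1, ∀ t₂ ∈ Icc (0:ℝ) 1,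
    s₁ ≤ s₂ → t₁ ≤ t₂ → toFun s₁ t₁ ≤ toFun s₂ t₂
  one' : ∀ s ∈ Icc (0:ℝ) 1, toFun s 1 = s

/-- Continuity of a t-norm (on the unit square). -/
def Tnorm.Cont (star : Tnorm) : Prop :=
  ContinuousOn (fun q : ℝ × ℝ => star.toFun q.1 q.2) (Icc 0 1 ×ˢ Icc 0 1)

/-- The t-normed (fuzzy) integral `∫^{∨∗} f dν = sup { ν(f⁻¹[t,1]) ∗ t : t ∈ [0,1] }`. -/
noncomputable def tInt {X : Type u} [TopologicalSpace X] (star : Tnorm) (ν : Capacity X) (f : X → ℝ) : ℝ :=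
  sSup {r : ℝ | ∃ t ∈ Icc (0:ℝ) 1, r = star.toFun (ν.cval (f ⁻¹' Icc t 1)) t}
/-- `IsPossTensor₂ ast ν μ τ` says that `τ ∈ M_∪(X × Y)` is the tensor product `ν ⊛ μ`
(generated by the t-norm `ast`) of possibility capacities: the possibility capacity
with density `[ν ⊛ μ](x,y) = [ν](x) ∗ [μ](y)`. -/
def IsPossTensor₂ {X : Type u} {Y : Type v} [TopologicalSpace X] [TopologicalSpace Y]
    (ast : Tnorm) (ν : Capacity X) (μ : Capacity Y) (τ : Capacity (X × Y)) : Prop :=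
  ∀ B : Set (X × Y), IsClosed B →
    τ.cval B = sSup ((fun q : X × Y => ast.toFun (ν.cval {q.1}) (μ.cval {q.2})) '' B)

open Topology

namespace Tnorm

variable (T : Tnorm) {a a' b b' : ℝ}

lemma mono_left (ha : a ∈ Icc (0:ℝ) 1) (ha' : a' ∈ Icc (0:ℝ) 1) (hb : b ∈ Icc (0:ℝ) 1)
    (h : a ≤ a') : T.toFun a b ≤ T.toFun a' b :=
  T.mono' a ha a' ha' b hb b hb h le_rfl

lemma mono_right (ha : a ∈ Icc (0:ℝ) 1) (hb : b ∈ Icc (0:ℝ) 1) (hb' : b' ∈ Icc (0:ℝ) 1)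
    (h : b ≤ b') : T.toFun a b ≤ T.toFun a b' :=
  T.mono' a ha a ha b hb b' hb' le_rfl h

lemma le_left (ha : a ∈ Icc (0:ℝ) 1) (hb : b ∈ Icc (0:ℝ) 1) : T.toFun a b ≤ a := by
  simpa only [T.one' a ha] using T.mono_right ha hb ⟨zero_le_one, le_rfl⟩ hb.2

lemma le_right (ha : a ∈ Icc (0:ℝ) 1) (hb : b ∈ Icc (0:ℝ) 1) : T.toFun a b ≤ b :=
  T.comm' a ha b hb ▸ T.le_left hb ha

lemma one_left (hb : b ∈ Icc (0:ℝ) 1) : T.toFun 1 b = b := by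
  rw [T.comm' 1 ⟨zero_le_one, le_rfl⟩ b hb, T.one' b hb]

lemma zero_left (hb : b ∈ Icc (0:ℝ) 1) : T.toFun 0 b = 0 :=
  le_antisymm (T.le_left ⟨le_rfl, zero_le_one⟩ hb) (T.mem' 0 ⟨le_rfl, zero_le_one⟩ b hb).1

end Tnorm

namespace Capacity

variable {X : Type*} [TopologicalSpace X] (ν : Capacity X)

lemma toFun_nonneg (F : Closeds X) : 0 ≤ ν.toFun F :=
  ν.empty' ▸ ν.mono' ⊥ F bot_le

lemma toFun_le_one (F : Closeds X) : ν.toFun F ≤ 1 :=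
  ν.univ' ▸ ν.mono' F ⊤ le_top

lemma cval_mem_Icc (A : Set X) : ν.cval A ∈ Icc (0:ℝ) 1 :=
  ⟨ν.toFun_nonneg _, ν.toFun_le_one _⟩

lemma cval_mono {A B : Set X} (h : A ⊆ B) : ν.cval A ≤ ν.cval B :=
  ν.mono' _ _ (closure_mono h)

lemma cval_of_isClosed {A : Set X} (hA : IsClosed A) : ν.cval A = ν.toFun ⟨A, hA⟩ :=
  congrArg ν.toFun (Closeds.ext hA.closure_eq)

lemma cval_empty : ν.cval ∅ = 0 :=
  (ν.cval_of_isClosed isClosed_empty).trans ν.empty'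

lemma cval_univ : ν.cval univ = 1 :=
  (ν.cval_of_isClosed isClosed_univ).trans ν.univ'

lemma mem_of_oval_compl_eq_zero [T1Space X] {S : Set X} (hS : ν.oval Sᶜ = 0) {x : X}
    (hx : 0 < ν.cval {x}) : x ∈ S := by
  by_contra hxS
  have hle : ν.cval {x} ≤ ν.oval Sᶜ :=
    le_csSup ⟨1, by rintro r ⟨K, -, rfl⟩; exact ν.toFun_le_one K⟩
      ⟨⟨{x}, isClosed_singleton⟩, singleton_subset_iff.2 hxS,
        (ν.cval_of_isClosed isClosed_singleton).symm⟩
  linarith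

lemma upperSemicontinuous_cval_singleton [T1Space X] :
    UpperSemicontinuous fun x => ν.cval {x} := by
  intro x a (hxa : ν.cval {x} < a)
  rw [ν.cval_of_isClosed isClosed_singleton] at hxa
  obtain ⟨O, hO, hxO, hOa⟩ := ν.usc' _ a hxa
  filter_upwards [hO.mem_nhds (hxO rfl)] with y hy
  show ν.cval {y} < a
  rw [ν.cval_of_isClosed isClosed_singleton]
  exact hOa _ (singleton_subset_iff.2 hy)

lemma exists_isMaxOn_cval_singleton [CompactSpace X] [T1Space X] {F : Set X} (hF : IsClosed F)
    (hne : F.Nonempty) : ∃ x ∈ F, IsMaxOn (fun x => ν.cval {x}) F x :=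
  (ν.upperSemicontinuous_cval_singleton.upperSemicontinuousOn F).exists_isMaxOn hne hF.isCompact

/-- The paper's `ν F = max {[ν] x | x ∈ F}`; `≥` is automatic by monotonicity. -/
def IsMaxOfDensity : Prop :=
  ∀ F : Set X, IsClosed F → F.Nonempty → ∃ x ∈ F, ν.cval {x} = ν.cval F

variable {ν}

lemma IsMaxOfDensity.exists_cval_singleton_eq_one (hν : ν.IsMaxOfDensity) :
    ∃ x, ν.cval {x} = 1 := by
  rcases (univ : Set X).eq_empty_or_nonempty with h | h
  · have h01 := ν.cval_univ
    rw [h, ν.cval_empty] at h01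
    exact absurd h01 zero_ne_one
  · obtain ⟨x, -, hx⟩ := hν univ isClosed_univ h
    exact ⟨x, hx.trans ν.cval_univ⟩

lemma isMaxOfDensity_of_cval_eq_sSup [CompactSpace X] [T1Space X]
    (h : ∀ F : Set X, IsClosed F → ν.cval F = sSup ((fun x => ν.cval {x}) '' F)) :
    ν.IsMaxOfDensity := by
  intro F hF hne
  obtain ⟨x, hx, hmax⟩ := ν.exists_isMaxOn_cval_singleton hF hne
  exact ⟨x, hx, ((h F hF).trans (IsGreatest.csSup_eq ⟨mem_image_of_mem _ hx,
    forall_mem_image.2 hmax⟩)).symm⟩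

end Capacity

namespace IsPossibility

variable {X : Type*} [TopologicalSpace X] {ν : Capacity X}

lemma toFun_finset_sup_lt (hν : IsPossibility ν) {ι : Type*} (s : Finset ι)
    (C : ι → Closeds X) {a : ℝ} (ha : 0 < a) (h : ∀ i ∈ s, ν.toFun (C i) < a) :
    ν.toFun (s.sup C) < a := by
  classical
  induction s using Finset.induction_on with
  | empty => simpa [ν.empty'] using ha
  | insert i s _ ih =>
    rw [Finset.sup_insert, hν]
    exact max_lt (h i (s.mem_insert_self i))
      (ih fun j hj => h j (Finset.mem_insert_of_mem hj))

lemma cval_lt_of_forall_cval_singleton_lt [CompactSpace X] [RegularSpace X]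
    (hν : IsPossibility ν) {F : Set X} (hF : IsClosed F) {a : ℝ} (ha : 0 < a)
    (h : ∀ x ∈ F, ν.cval {x} < a) : ν.cval F < a := by
  have hnhds : ∀ x ∈ F, ∃ C : Closeds X, (C : Set X) ∈ 𝓝 x ∧ ν.toFun C < a := by
    intro x hx
    obtain ⟨O, hO, hxO, hOa⟩ := ν.usc' _ a (h x hx)
    obtain ⟨C, hCx, hC, hCO⟩ :=
      exists_mem_nhds_isClosed_subset (hO.mem_nhds (hxO (subset_closure rfl)))
    exact ⟨⟨C, hC⟩, hCx, hOa _ hCO⟩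
  choose! C hCx hCa using hnhds
  obtain ⟨t, htF, hFt⟩ := hF.isCompact.elim_nhds_subcover (fun x => (C x : Set X)) hCx
  have hFle : (⟨F, hF⟩ : Closeds X) ≤ t.sup C := by
    intro x hx
    obtain ⟨y, hy, hxy⟩ := mem_iUnion₂.1 (hFt hx)
    exact Finset.le_sup (f := C) hy hxy
  rw [ν.cval_of_isClosed hF]
  exact (ν.mono' _ _ hFle).trans_lt
    (hν.toFun_finset_sup_lt t C ha fun x hx => hCa x (htF x hx))

lemma isMaxOfDensity [CompactSpace X] [T2Space X] (hν : IsPossibility ν) :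
    ν.IsMaxOfDensity := by
  intro F hF hne
  obtain ⟨x, hx, hmax⟩ := ν.exists_isMaxOn_cval_singleton hF hne
  refine ⟨x, hx, le_antisymm (ν.cval_mono (singleton_subset_iff.2 hx)) (not_lt.1 fun hlt => ?_)⟩
  exact lt_irrefl _ (hν.cval_lt_of_forall_cval_singleton_lt hF
    ((ν.cval_mem_Icc _).1.trans_lt hlt) fun y hy => (hmax hy).trans_lt hlt)

end IsPossibility

namespace IsPossTensor₂

variable {X Y : Type*} [TopologicalSpace X] [TopologicalSpace Y] [T1Space X] [T1Space Y]
  {ast : Tnorm} {ν : Capacity X} {μ : Capacity Y} {τ : Capacity (X × Y)}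

lemma cval_singleton (hτ : IsPossTensor₂ ast ν μ τ) (q : X × Y) :
    τ.cval {q} = ast.toFun (ν.cval {q.1}) (μ.cval {q.2}) := by
  rw [hτ {q} isClosed_singleton, image_singleton, csSup_singleton]

lemma isMaxOfDensity [CompactSpace X] [CompactSpace Y] (hτ : IsPossTensor₂ ast ν μ τ) :
    τ.IsMaxOfDensity :=
  Capacity.isMaxOfDensity_of_cval_eq_sSup fun F hF => by
    simpa only [hτ.cval_singleton] using hτ F hF

end IsPossTensor₂

section tInt

variable {Z : Type*} [TopologicalSpace Z] (T : Tnorm) (ν : Capacity Z) (h : Z → ℝ)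

lemma tInt_bddAbove :
    BddAbove {r : ℝ | ∃ t ∈ Icc (0:ℝ) 1, r = T.toFun (ν.cval (h ⁻¹' Icc t 1)) t} :=
  ⟨1, by rintro r ⟨t, ht, rfl⟩; exact (T.mem' _ (ν.cval_mem_Icc _) t ht).2⟩

lemma le_tInt {t : ℝ} (ht : t ∈ Icc (0:ℝ) 1) :
    T.toFun (ν.cval (h ⁻¹' Icc t 1)) t ≤ tInt T ν h :=
  le_csSup (tInt_bddAbove T ν h) ⟨t, ht, rfl⟩

lemma tInt_le {M : ℝ} (hM : ∀ t ∈ Icc (0:ℝ) 1, T.toFun (ν.cval (h ⁻¹' Icc t 1)) t ≤ M) :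
    tInt T ν h ≤ M :=
  csSup_le ⟨T.toFun (ν.cval (h ⁻¹' Icc 0 1)) 0, 0, ⟨le_rfl, zero_le_one⟩, rfl⟩
    (by rintro r ⟨t, ht, rfl⟩; exact hM t ht)

lemma tInt_nonneg : 0 ≤ tInt T ν h :=
  (T.mem' _ (ν.cval_mem_Icc _) 0 ⟨le_rfl, zero_le_one⟩).1.trans
    (le_tInt T ν h ⟨le_rfl, zero_le_one⟩)

lemma tInt_le_one : tInt T ν h ≤ 1 :=
  tInt_le T ν h fun t ht => (T.mem' _ (ν.cval_mem_Icc _) t ht).2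

lemma cval_singleton_tnorm_le_tInt {q : Z} (hq : h q ∈ Icc (0:ℝ) 1) :
    T.toFun (ν.cval {q}) (h q) ≤ tInt T ν h := by
  have hq_mem : q ∈ h ⁻¹' Icc (h q) 1 := ⟨le_rfl, hq.2⟩
  calc T.toFun (ν.cval {q}) (h q) ≤ T.toFun (ν.cval (h ⁻¹' Icc (h q) 1)) (h q) :=
        T.mono_left (ν.cval_mem_Icc _) (ν.cval_mem_Icc _) hq
          (ν.cval_mono (singleton_subset_iff.2 hq_mem))
    _ ≤ tInt T ν h := le_tInt T ν h hq

variable {T ν h}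

lemma tInt_le_of_forall_cval_singleton_tnorm_le (hν : ν.IsMaxOfDensity) (hh : Continuous h)
    {M : ℝ} (hM0 : 0 ≤ M) (hM : ∀ q, T.toFun (ν.cval {q}) (h q) ≤ M) : tInt T ν h ≤ M := by
  refine tInt_le T ν h fun t ht => ?_
  rcases (h ⁻¹' Icc t 1).eq_empty_or_nonempty with hempty | hne
  · rw [hempty, ν.cval_empty, T.zero_left ht]
    exact hM0
  · obtain ⟨q, hq, hνq⟩ := hν _ (isClosed_Icc.preimage hh) hne
    have hq01 : h q ∈ Icc (0:ℝ) 1 := ⟨ht.1.trans hq.1, hq.2⟩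
    rw [← hνq]
    exact (T.mono_right (ν.cval_mem_Icc _) ht hq01 hq.1).trans (hM q)

end tInt

section TwoPlayerGame

variable {X Y : Type*} [TopologicalSpace X] [TopologicalSpace Y] [T1Space X] [T1Space Y]
  {T ast : Tnorm} {f : X × Y → ℝ}

lemma tInt_tensor_le_sSup_tInt_left [CompactSpace X] [CompactSpace Y] (hf : Continuous f)
    (hf01 : ∀ q, f q ∈ Icc (0:ℝ) 1) {ν' : Capacity X} {μ : Capacity Y}
    {τ' : Capacity (X × Y)} (hτ' : IsPossTensor₂ ast ν' μ τ') :
    tInt T τ' f ≤ sSup (range fun x => tInt T μ fun y => f (x, y)) := by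
  have hbdd : BddAbove (range fun x => tInt T μ fun y => f (x, y)) :=
    ⟨1, forall_mem_range.2 fun x => tInt_le_one T μ _⟩
  refine tInt_le_of_forall_cval_singleton_tnorm_le hτ'.isMaxOfDensity hf
    (Real.sSup_nonneg (forall_mem_range.2 fun x => tInt_nonneg T μ _)) fun q => ?_
  calc T.toFun (τ'.cval {q}) (f q)
      ≤ T.toFun (μ.cval {q.2}) (f q) := by
        rw [hτ'.cval_singleton]
        exact T.mono_left (ast.mem' _ (ν'.cval_mem_Icc _) _ (μ.cval_mem_Icc _))
          (μ.cval_mem_Icc _) (hf01 q) (ast.le_right (ν'.cval_mem_Icc _) (μ.cval_mem_Icc _))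
    _ ≤ tInt T μ fun y => f (q.1, y) :=
        cval_singleton_tnorm_le_tInt T μ (fun y => f (q.1, y)) (q := q.2) (hf01 q)
    _ ≤ _ := le_csSup hbdd (mem_range_self q.1)

lemma tInt_tensor_le_sSup_tInt_right [CompactSpace X] [CompactSpace Y] (hf : Continuous f)
    (hf01 : ∀ q, f q ∈ Icc (0:ℝ) 1) {ν : Capacity X} {μ' : Capacity Y}
    {τ' : Capacity (X × Y)} (hτ' : IsPossTensor₂ ast ν μ' τ') :
    tInt T τ' f ≤ sSup (range fun y => tInt T ν fun x => f (x, y)) := by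
  have hbdd : BddAbove (range fun y => tInt T ν fun x => f (x, y)) :=
    ⟨1, forall_mem_range.2 fun y => tInt_le_one T ν _⟩
  refine tInt_le_of_forall_cval_singleton_tnorm_le hτ'.isMaxOfDensity hf
    (Real.sSup_nonneg (forall_mem_range.2 fun y => tInt_nonneg T ν _)) fun q => ?_
  calc T.toFun (τ'.cval {q}) (f q)
      ≤ T.toFun (ν.cval {q.1}) (f q) := by
        rw [hτ'.cval_singleton]
        exact T.mono_left (ast.mem' _ (ν.cval_mem_Icc _) _ (μ'.cval_mem_Icc _))
          (ν.cval_mem_Icc _) (hf01 q) (ast.le_left (ν.cval_mem_Icc _) (μ'.cval_mem_Icc _))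
    _ ≤ tInt T ν fun x => f (x, q.2) :=
        cval_singleton_tnorm_le_tInt T ν (fun x => f (x, q.2)) (q := q.1) (hf01 q)
    _ ≤ _ := le_csSup hbdd (mem_range_self q.2)

lemma tInt_le_tInt_tensor_left (hf : Continuous f) (hf01 : ∀ q, f q ∈ Icc (0:ℝ) 1)
    {ν : Capacity X} {μ : Capacity Y} {τ : Capacity (X × Y)} (hτ : IsPossTensor₂ ast ν μ τ)
    (hμ : μ.IsMaxOfDensity) {x₀ : X} (hx₀ : ν.cval {x₀} = 1) :
    tInt T μ (fun y => f (x₀, y)) ≤ tInt T τ f := by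
  refine tInt_le_of_forall_cval_singleton_tnorm_le hμ (hf.comp (.prodMk_right x₀))
    (tInt_nonneg T τ f) fun y => ?_
  have hdensity : τ.cval {(x₀, y)} = μ.cval {y} := by
    rw [hτ.cval_singleton, hx₀, ast.one_left (μ.cval_mem_Icc _)]
  rw [← hdensity]
  exact cval_singleton_tnorm_le_tInt T τ f (hf01 _)

lemma tInt_le_tInt_tensor_right (hf : Continuous f) (hf01 : ∀ q, f q ∈ Icc (0:ℝ) 1)
    {ν : Capacity X} {μ : Capacity Y} {τ : Capacity (X × Y)} (hτ : IsPossTensor₂ ast ν μ τ)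
    (hν : ν.IsMaxOfDensity) {y₀ : Y} (hy₀ : μ.cval {y₀} = 1) :
    tInt T ν (fun x => f (x, y₀)) ≤ tInt T τ f := by
  refine tInt_le_of_forall_cval_singleton_tnorm_le hν (hf.comp (.prodMk_left y₀))
    (tInt_nonneg T τ f) fun x => ?_
  have hdensity : τ.cval {(x, y₀)} = ν.cval {x} := by
    rw [hτ.cval_singleton, hy₀, ast.one' _ (ν.cval_mem_Icc _)]
  rw [← hdensity]
  exact cval_singleton_tnorm_le_tInt T τ f (hf01 _)

end TwoPlayerGame

theorem equilibrium_is_nash_in_capacities_general {X : Type u} {Y : Type u}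
    [TopologicalSpace X] [CompactSpace X] [T2Space X]
    [TopologicalSpace Y] [CompactSpace Y] [T2Space Y]
    (f g : X × Y → ℝ) (hf : Continuous f) (hg : Continuous g)
    (hf01 : ∀ q, f q ∈ Icc (0:ℝ) 1) (hg01 : ∀ q, g q ∈ Icc (0:ℝ) 1)
    (star ast : Tnorm)
    (ν : Capacity X) (μ : Capacity Y) (hν : IsPossibility ν) (hμ : IsPossibility μ)
    -- `(ν, μ)` is an equilibrium under uncertainty with respect to `⋆`:
    (heq₁ : ν.oval ({x : X | tInt star μ (fun y => f (x, y)) =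
        sSup (Set.range fun z : X => tInt star μ (fun y => f (z, y)))}ᶜ) = 0)
    (heq₂ : μ.oval ({y : Y | tInt star ν (fun x => g (x, y)) =
        sSup (Set.range fun w : Y => tInt star ν (fun x => g (x, w)))}ᶜ) = 0) :
    -- `(ν, μ)` is a Nash equilibrium of the game in possibility-capacity strategies:
    (∀ ν' : Capacity X, IsPossibility ν' →
      ∀ τ' : Capacity (X × Y), IsPossTensor₂ ast ν' μ τ' →
      ∀ τ : Capacity (X × Y), IsPossTensor₂ ast ν μ τ →
        tInt star τ' f ≤ tInt star τ f) ∧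
    (∀ μ' : Capacity Y, IsPossibility μ' →
      ∀ τ' : Capacity (X × Y), IsPossTensor₂ ast ν μ' τ' →
      ∀ τ : Capacity (X × Y), IsPossTensor₂ ast ν μ τ →
        tInt star τ' g ≤ tInt star τ g) := by
  obtain ⟨x₀, hx₀⟩ := hν.isMaxOfDensity.exists_cval_singleton_eq_one
  obtain ⟨y₀, hy₀⟩ := hμ.isMaxOfDensity.exists_cval_singleton_eq_one
  have hx₀R := ν.mem_of_oval_compl_eq_zero heq₁ (hx₀ ▸ one_pos)
  have hy₀R := μ.mem_of_oval_compl_eq_zero heq₂ (hy₀ ▸ one_pos)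
  refine ⟨fun ν' _ τ' hτ' τ hτ => ?_, fun μ' _ τ' hτ' τ hτ => ?_⟩
  · calc tInt star τ' f ≤ sSup (range fun x => tInt star μ fun y => f (x, y)) :=
          tInt_tensor_le_sSup_tInt_left hf hf01 hτ'
      _ = tInt star μ fun y => f (x₀, y) := hx₀R.symm
      _ ≤ tInt star τ f := tInt_le_tInt_tensor_left hf hf01 hτ hμ.isMaxOfDensity hx₀
  · calc tInt star τ' g ≤ sSup (range fun y => tInt star ν fun x => g (x, y)) :=
          tInt_tensor_le_sSup_tInt_right hg hg01 hτ'
      _ = tInt star ν fun x => g (x, y₀) := hy₀R.symm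
      _ ≤ tInt star τ g := tInt_le_tInt_tensor_right hg hg01 hτ hν.isMaxOfDensity hy₀

/-- in a two player game `(f,g)` on compacta `X × Y` with continuous
payoffs in `[0,1]`, if a pair of possibility capacities `(ν, μ)` is an equilibrium under
uncertainty with respect to a continuous t-norm `⋆`, then `(ν, μ)` is a Nash equilibrium
of the game in possibility-capacity strategies with payoffs
`ef(ν', μ') = ∫^{∨⋆} f d(ν' ⊛ μ')`, the tensor product being generated by a continuous
t-norm `∗`. -/
theorem equilibrium_is_nash_in_capacities {X : Type u} {Y : Type u}
    [TopologicalSpace X] [CompactSpace X] [T2Space X]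
    [TopologicalSpace Y] [CompactSpace Y] [T2Space Y]
    (f g : X × Y → ℝ) (hf : Continuous f) (hg : Continuous g)
    (hf01 : ∀ q, f q ∈ Icc (0:ℝ) 1) (hg01 : ∀ q, g q ∈ Icc (0:ℝ) 1)
    (star ast : Tnorm) (hstar : star.Cont) (hast : ast.Cont)
    (ν : Capacity X) (μ : Capacity Y) (hν : IsPossibility ν) (hμ : IsPossibility μ)
    -- `(ν, μ)` is an equilibrium under uncertainty with respect to `⋆`:
    (heq₁ : ν.oval ({x : X | tInt star μ (fun y => f (x, y)) =
        sSup (Set.range fun z : X => tInt star μ (fun y => f (z, y)))}ᶜ) = 0)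
    (heq₂ : μ.oval ({y : Y | tInt star ν (fun x => g (x, y)) =
        sSup (Set.range fun w : Y => tInt star ν (fun x => g (x, w)))}ᶜ) = 0) :
    -- `(ν, μ)` is a Nash equilibrium of the game in possibility-capacity strategies:
    (∀ ν' : Capacity X, IsPossibility ν' →
      ∀ τ' : Capacity (X × Y), IsPossTensor₂ ast ν' μ τ' →
      ∀ τ : Capacity (X × Y), IsPossTensor₂ ast ν μ τ →
        tInt star τ' f ≤ tInt star τ f) ∧
    (∀ μ' : Capacity Y, IsPossibility μ' →
      ∀ τ' : Capacity (X × Y), IsPossTensor₂ ast ν μ' τ' →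
      ∀ τ : Capacity (X × Y), IsPossTensor₂ ast ν μ τ →
        tInt star τ' g ≤ tInt star τ g) :=
  equilibrium_is_nash_in_capacities_general f g hf hg hf01 hg01 star ast ν μ hν hμ heq₁ heq₂
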